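/- Let Y ∈ S = T \ (U_1 ∪ U_2), let X ∈ A_Y (i.e., ‖x_i − y_i‖ < ε(Y) for all i ∈ N), let K ∈ {A,B}, and let C be a maximal clique of the δ_K-proximity graph G_{δ_K}(X) with C ∩ N_mn ≠ ∅; set C_mn = C ∩ N_mn and C_mj = C ∩ N_mj. Then every minimizer ᾱ_C over injective maps α : C_mn → C_mj of ‖[x_j]_{j∈C_mn} − [x_{α(j)}]_{j∈C_mn}‖ coincides with the restriction of α_Y to C_mn: ᾱ_C(j) = α_Y(j) for all j ∈ C_mn. -/

import Mathlib

/-!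
Since `Y` lies in the target set, the minimizer `α_Y` puts every minority agent `i` at the
position of its partner. Each member `b ∉ {i, α_Y(i)}` of `C` is within `δ_K` of `x_i` and
sits (in `Y`) at the position of a majority agent other than `α_Y(i)`; as `ε(Y)` keeps those
distances `2ε` away from `δ_K`, we get `‖y_i - y_b‖ ≤ δ_K - 2ε`. With
`‖x_i - x_{α_Y(i)}‖ < 2ε ≤ δ_B`, `α_Y(i)` is adjacent to all of `C` and lies in `C` by
maximality. Thus `α_Y` competes on `C`, with every term `< 2ε`, while any partner other than
`α_Y(i)` costs `> 4ε` because `ε(Y)` is at most a sixth of its distance.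
-/

/-- Group A: agents `1,…,n_A` (zero-indexed: `i < n_A`). -/
def grpA (n nA : ℕ) : Finset (Fin n) := Finset.univ.filter fun i => (i : ℕ) < nA

/-- Group B: agents `n_A+1,…,n` (zero-indexed: `n_A ≤ i`). -/
def grpB (n nA : ℕ) : Finset (Fin n) := Finset.univ.filter fun i => nA ≤ (i : ℕ)

/-- `N_mn`, `N_mj` is an admissible minority/majority assignment of the two groups:
one of them is group A and the other group B, and the minority one has at most as many
agents as the majority one. -/
def MinorityMajority (n nA : ℕ) (Nmn Nmj : Finset (Fin n)) : Prop :=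
  (Nmn = grpA n nA ∧ Nmj = grpB n nA ∧ (grpA n nA).card ≤ (grpB n nA).card) ∨
  (Nmn = grpB n nA ∧ Nmj = grpA n nA ∧ (grpB n nA).card ≤ (grpA n nA).card)

/-- `α` is a one-to-one (injective) map from `Nmn` into `Nmj`. -/
def IsMatching {n : ℕ} (Nmn Nmj : Finset (Fin n)) (α : Fin n → Fin n) : Prop :=
  Set.InjOn α ↑Nmn ∧ ∀ i ∈ Nmn, α i ∈ Nmj

/-- The matching cost `‖[y_j]_{j∈Nmn} − [y_{α(j)}]_{j∈Nmn}‖` (Frobenius norm). -/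
noncomputable def matchCost {d n : ℕ} (Nmn : Finset (Fin n))
    (Y : Fin n → EuclideanSpace ℝ (Fin d)) (α : Fin n → Fin n) : ℝ :=
  Real.sqrt (∑ j ∈ Nmn, ‖Y j - Y (α j)‖ ^ 2)

/-- `α` is a minimizer of the matching cost over all injective maps `Nmn → Nmj`. -/
def IsMinMatching {d n : ℕ} (Nmn Nmj : Finset (Fin n))
    (Y : Fin n → EuclideanSpace ℝ (Fin d)) (α : Fin n → Fin n) : Prop :=
  IsMatching Nmn Nmj α ∧
    ∀ β, IsMatching Nmn Nmj β → matchCost Nmn Y α ≤ matchCost Nmn Y β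

/-- The target set `T` of matched configurations. -/
def targetT {d n : ℕ} (Nmn Nmj : Finset (Fin n)) :
    Set (Fin n → EuclideanSpace ℝ (Fin d)) :=
  {Y | ∃ α, IsMatching Nmn Nmj α ∧ ∀ i ∈ Nmn, Y i = Y (α i)}

/-- `U_1`: configurations in which two distinct majority agents coincide. -/
def setU1 {d n : ℕ} (Nmj : Finset (Fin n)) : Set (Fin n → EuclideanSpace ℝ (Fin d)) :=
  {Y | ∃ i ∈ Nmj, ∃ j ∈ Nmj, i ≠ j ∧ Y i = Y j}

/-- `U_2`: configurations in which some minority-majority pair is exactly at distance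
`δ_A` or `δ_B`. -/
def setU2 {d n : ℕ} (δA δB : ℝ) (Nmn Nmj : Finset (Fin n)) :
    Set (Fin n → EuclideanSpace ℝ (Fin d)) :=
  {Y | ∃ i ∈ Nmn, ∃ j ∈ Nmj, ‖Y i - Y j‖ = δA ∨ ‖Y i - Y j‖ = δB}

/-- `ε(Y) = min{ε_0(Y), ε_A(Y), ε_B(Y), δ_B/2}` with
`ε_0(Y) = (1/6) min{‖y_i − y_j‖ : i ∈ N_mn, j ∈ N_mj, j ≠ α_Y(i)}` and
`ε_K(Y) = (1/2) min{|δ_K − ‖y_i − y_j‖| : i ∈ N_mn, j ∈ N_mj, j ≠ α_Y(i)}`,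
`K = A, B`, where minima over the empty set are interpreted as `+∞` (implemented by
taking the minimum of all listed quantities together with `δ_B/2`). -/
noncomputable def epsY {d n : ℕ} (δA δB : ℝ) (Nmn Nmj : Finset (Fin n))
    (αY : Fin n → Fin n) (Y : Fin n → EuclideanSpace ℝ (Fin d)) : ℝ :=
  (insert (δB / 2)
    ((((Nmn ×ˢ Nmj).filter fun p => p.2 ≠ αY p.1).image
        fun p => (1 / 6 : ℝ) * ‖Y p.1 - Y p.2‖) ∪
      (((Nmn ×ˢ Nmj).filter fun p => p.2 ≠ αY p.1).image
        fun p => (1 / 2 : ℝ) * |δA - ‖Y p.1 - Y p.2‖|) ∪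
      (((Nmn ×ˢ Nmj).filter fun p => p.2 ≠ αY p.1).image
        fun p => (1 / 2 : ℝ) * |δB - ‖Y p.1 - Y p.2‖|))).min'
    (Finset.insert_nonempty _ _)

/-- `C` is a clique of the `δ`-proximity graph `G_δ(X)`: any two distinct nodes of `C`
are within distance `δ`. -/
def IsPCl {d n : ℕ} (δ : ℝ) (X : Fin n → EuclideanSpace ℝ (Fin d))
    (C : Finset (Fin n)) : Prop :=
  ∀ i ∈ C, ∀ j ∈ C, i ≠ j → ‖X i - X j‖ ≤ δ

/-- `C` is a maximal clique of the `δ`-proximity graph `G_δ(X)`. -/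
def IsMaxPCl {d n : ℕ} (δ : ℝ) (X : Fin n → EuclideanSpace ℝ (Fin d))
    (C : Finset (Fin n)) : Prop :=
  IsPCl δ X C ∧ ∀ C', IsPCl δ X C' → C ⊆ C' → C' = C




open Finset

variable {d n : ℕ}

lemma MinorityMajority.mem_or_mem {nA : ℕ} {Nmn Nmj : Finset (Fin n)}
    (h : MinorityMajority n nA Nmn Nmj) (k : Fin n) : k ∈ Nmn ∨ k ∈ Nmj := by
  rcases h with ⟨rfl, rfl, -⟩ | ⟨rfl, rfl, -⟩ <;> simp only [grpA, grpB, mem_filter,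
    mem_univ, true_and] <;> omega

section epsY

variable (δA δB : ℝ) (Nmn Nmj : Finset (Fin n)) (αY : Fin n → Fin n)
  (Y : Fin n → EuclideanSpace ℝ (Fin d))

lemma epsY_le_half : epsY δA δB Nmn Nmj αY Y ≤ δB / 2 :=
  min'_le _ _ (mem_insert_self _ _)

variable {Nmn Nmj αY} {i j : Fin n} (hi : i ∈ Nmn) (hj : j ∈ Nmj) (hne : j ≠ αY i)
include hi hj hne

lemma six_mul_epsY_le_norm : 6 * epsY δA δB Nmn Nmj αY Y ≤ ‖Y i - Y j‖ := by
  have : epsY δA δB Nmn Nmj αY Y ≤ (1 / 6 : ℝ) * ‖Y i - Y j‖ :=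
    min'_le _ _ (mem_insert_of_mem (mem_union_left _ (mem_union_left _
      (mem_image.mpr ⟨(i, j), mem_filter.mpr ⟨mem_product.mpr ⟨hi, hj⟩, hne⟩, rfl⟩))))
  linarith

lemma two_mul_epsY_le_abs_sub {δK : ℝ} (hK : δK = δA ∨ δK = δB) :
    2 * epsY δA δB Nmn Nmj αY Y ≤ |δK - ‖Y i - Y j‖| := by
  have hmem : ((i, j) : Fin n × Fin n) ∈ (Nmn ×ˢ Nmj).filter fun p => p.2 ≠ αY p.1 :=
    mem_filter.mpr ⟨mem_product.mpr ⟨hi, hj⟩, hne⟩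
  rcases hK with rfl | rfl
  · have : epsY δK δB Nmn Nmj αY Y ≤ (1 / 2 : ℝ) * |δK - ‖Y i - Y j‖| :=
      min'_le _ _ (mem_insert_of_mem (mem_union_left _ (mem_union_right _
        (mem_image.mpr ⟨(i, j), hmem, rfl⟩))))
    linarith
  · have : epsY δA δK Nmn Nmj αY Y ≤ (1 / 2 : ℝ) * |δK - ‖Y i - Y j‖| :=
      min'_le _ _ (mem_insert_of_mem (mem_union_right _
        (mem_image.mpr ⟨(i, j), hmem, rfl⟩)))
    linarith

end epsY

lemma abs_norm_sub_sub_norm_sub_lt {E : Type*} [SeminormedAddCommGroup E] {x x' y y' : E}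
    {ε : ℝ} (hx : ‖x - y‖ < ε) (hx' : ‖x' - y'‖ < ε) :
    |‖x - x'‖ - ‖y - y'‖| < 2 * ε := by
  have := dist_dist_dist_le x x' y y'
  simp only [dist_eq_norm, Real.norm_eq_abs] at this
  linarith

section matchCost

variable {s : Finset (Fin n)} {Y : Fin n → EuclideanSpace ℝ (Fin d)} {α β : Fin n → Fin n}

lemma matchCost_eq_zero_iff : matchCost s Y α = 0 ↔ ∀ j ∈ s, Y j = Y (α j) := by
  rw [matchCost, Real.sqrt_eq_zero (sum_nonneg fun _ _ => by positivity),
    sum_eq_zero_iff_of_nonneg fun _ _ => by positivity]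
  simp only [ne_eq, OfNat.ofNat_ne_zero, not_false_eq_true, pow_eq_zero_iff, norm_eq_zero,
    sub_eq_zero]

lemma matchCost_lt_matchCost
    (h : ∀ k ∈ s, α k ≠ β k → ‖Y k - Y (α k)‖ < ‖Y k - Y (β k)‖)
    {j : Fin n} (hj : j ∈ s) (hne : α j ≠ β j) : matchCost s Y α < matchCost s Y β := by
  refine Real.sqrt_lt_sqrt (sum_nonneg fun _ _ => by positivity) (sum_lt_sum ?_ ?_)
  · intro k hk
    by_cases hk' : α k = β k
    · rw [hk']
    · exact (pow_lt_pow_left₀ (h k hk hk') (norm_nonneg _) two_ne_zero).le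
  · exact ⟨j, hj, pow_lt_pow_left₀ (h j hj hne) (norm_nonneg _) two_ne_zero⟩

lemma IsMinMatching.eq_apply_of_mem_targetT {Nmj : Finset (Fin n)}
    (hα : IsMinMatching s Nmj Y α) (hY : Y ∈ targetT s Nmj) : ∀ i ∈ s, Y i = Y (α i) := by
  obtain ⟨β, hβ, hβY⟩ := hY
  rw [← matchCost_eq_zero_iff]
  refine le_antisymm ?_ (Real.sqrt_nonneg _)
  exact (hα.2 β hβ).trans (matchCost_eq_zero_iff.mpr hβY).le

end matchCost

lemma IsMaxPCl.mem_of_forall_norm_sub_le {δ : ℝ} {X : Fin n → EuclideanSpace ℝ (Fin d)}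
    {C : Finset (Fin n)} (hC : IsMaxPCl δ X C) {a : Fin n}
    (ha : ∀ b ∈ C, b ≠ a → ‖X a - X b‖ ≤ δ) : a ∈ C := by
  have hext : IsPCl δ X (insert a C) := by
    intro b hb c hc hbc
    rcases mem_insert.mp hb with rfl | hbC <;> rcases mem_insert.mp hc with rfl | hcC
    · exact absurd rfl hbc
    · exact ha c hcC (Ne.symm hbc)
    · rw [norm_sub_rev]; exact ha b hbC hbc
    · exact hC.1 b hbC c hcC hbc
  rw [← hC.2 _ hext (subset_insert _ _)]
  exact mem_insert_self _ _

section perturbation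

variable {δA δB : ℝ} {Nmn Nmj : Finset (Fin n)} {αY : Fin n → Fin n}
  {Y X : Fin n → EuclideanSpace ℝ (Fin d)}
  (hαY : IsMatching Nmn Nmj αY) (hYα : ∀ i ∈ Nmn, Y i = Y (αY i))
  (hX : ∀ i, ‖X i - Y i‖ < epsY δA δB Nmn Nmj αY Y)

include hYα hX

lemma norm_sub_apply_lt {k : Fin n} (hk : k ∈ Nmn) :
    ‖X k - X (αY k)‖ < 2 * epsY δA δB Nmn Nmj αY Y := by
  have := abs_norm_sub_sub_norm_sub_lt (hX k) (hX (αY k))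
  rwa [← hYα k hk, sub_self, norm_zero, sub_zero, abs_of_nonneg (norm_nonneg _)] at this

lemma norm_sub_apply_lt_norm_sub {k m : Fin n} (hk : k ∈ Nmn) (hm : m ∈ Nmj)
    (hne : m ≠ αY k) : ‖X k - X (αY k)‖ < ‖X k - X m‖ := by
  have hsep := six_mul_epsY_le_norm δA δB Y hk hm hne
  have hfar := abs_norm_sub_sub_norm_sub_lt (hX k) (hX m)
  linarith [norm_sub_apply_lt hYα hX hk, abs_lt.mp hfar]

include hαY in
lemma IsMaxPCl.apply_mem {nA : ℕ} (hmm : MinorityMajority n nA Nmn Nmj) (hAB : δB < δA)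
    {δK : ℝ} (hK : δK = δA ∨ δK = δB) {C : Finset (Fin n)} (hC : IsMaxPCl δK X C)
    {i : Fin n} (hiC : i ∈ C) (hiN : i ∈ Nmn) : αY i ∈ C := by
  set ε := epsY δA δB Nmn Nmj αY Y
  refine hC.mem_of_forall_norm_sub_le fun b hbC hb => ?_
  obtain rfl | hbi := eq_or_ne b i
  · have hδ : δB ≤ δK := by rcases hK with rfl | rfl <;> linarith
    rw [norm_sub_rev]
    linarith [norm_sub_apply_lt hYα hX hiN, epsY_le_half δA δB Nmn Nmj αY Y]
  obtain ⟨j, hj, hji, hYj⟩ : ∃ j ∈ Nmj, j ≠ αY i ∧ Y b = Y j := by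
    rcases hmm.mem_or_mem b with hbN | hbN
    · exact ⟨αY b, hαY.2 b hbN, fun h => hbi (hαY.1 hbN hiN h), hYα b hbN⟩
    · exact ⟨b, hbN, hb, rfl⟩
  have hsep := two_mul_epsY_le_abs_sub δA δB Y hiN hj hji hK
  rw [← hYj] at hsep
  have hclose : ‖Y i - Y b‖ < δK + 2 * ε := by
    linarith [hC.1 i hiC b hbC hbi.symm, abs_lt.mp (abs_norm_sub_sub_norm_sub_lt (hX i) (hX b))]
  have hYb : ‖Y i - Y b‖ ≤ δK - 2 * ε := by
    rcases abs_cases (δK - ‖Y i - Y b‖) with ⟨h, -⟩ | ⟨h, -⟩ <;> linarith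
  have hmove := abs_norm_sub_sub_norm_sub_lt (hX (αY i)) (hX b)
  rw [← hYα i hiN] at hmove
  linarith [abs_lt.mp hmove]

end perturbation

theorem clique_matching_agrees_with_global_general
    {d n : ℕ} (nA : ℕ)
    (δA δB : ℝ) (hAB : δB < δA)
    (Nmn Nmj : Finset (Fin n)) (hmm : MinorityMajority n nA Nmn Nmj)
    (Y : Fin n → EuclideanSpace ℝ (Fin d))
    (hY : Y ∈ targetT Nmn Nmj \ (setU1 Nmj ∪ setU2 δA δB Nmn Nmj))
    (αY : Fin n → Fin n) (hαY : IsMinMatching Nmn Nmj Y αY)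
    (X : Fin n → EuclideanSpace ℝ (Fin d))
    (hX : ∀ i, ‖X i - Y i‖ < epsY δA δB Nmn Nmj αY Y)
    (δK : ℝ) (hK : δK = δA ∨ δK = δB)
    (C : Finset (Fin n)) (hC : IsMaxPCl δK X C)
    (αC : Fin n → Fin n) (hαC : IsMinMatching (C ∩ Nmn) (C ∩ Nmj) X αC) :
    ∀ j ∈ C ∩ Nmn, αC j = αY j := by
  have hYα := hαY.eq_apply_of_mem_targetT hY.1
  have hαYC : IsMatching (C ∩ Nmn) (C ∩ Nmj) αY := by
    refine ⟨hαY.1.1.mono inter_subset_right, fun i hi => ?_⟩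
    obtain ⟨hiC, hiN⟩ := mem_inter.mp hi
    exact mem_inter.mpr ⟨hC.apply_mem hαY.1 hYα hX hmm hAB hK hiC hiN, hαY.1.2 i hiN⟩
  intro j hj
  by_contra hne
  refine (hαC.2 αY hαYC).not_gt (matchCost_lt_matchCost (fun k hk hk' => ?_) hj (Ne.symm hne))
  exact norm_sub_apply_lt_norm_sub hYα hX (mem_inter.mp hk).2
    (mem_inter.mp (hαC.1.2 k hk)).2 (Ne.symm hk')

/-- Let `Y ∈ S`, `X ∈ A_Y`, `K ∈ {A,B}`, and let `C` be a maximal clique of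
`G_{δ_K}(X)` with `C ∩ N_mn ≠ ∅`; set `C_mn = C ∩ N_mn`, `C_mj = C ∩ N_mj`.  Then any
minimizer `ᾱ_C` of the matching cost over injective maps `C_mn → C_mj` coincides on
`C_mn` with the restriction of `α_Y`. -/
theorem clique_matching_agrees_with_global
    {d n : ℕ} (nA : ℕ) (hnA : 0 < nA) (hnAn : nA < n)
    (δA δB : ℝ) (hB : 0 < δB) (hAB : δB < δA)
    (Nmn Nmj : Finset (Fin n)) (hmm : MinorityMajority n nA Nmn Nmj)
    (Y : Fin n → EuclideanSpace ℝ (Fin d))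
    (hY : Y ∈ targetT Nmn Nmj \ (setU1 Nmj ∪ setU2 δA δB Nmn Nmj))
    (αY : Fin n → Fin n) (hαY : IsMinMatching Nmn Nmj Y αY)
    (X : Fin n → EuclideanSpace ℝ (Fin d))
    (hX : ∀ i, ‖X i - Y i‖ < epsY δA δB Nmn Nmj αY Y)
    (δK : ℝ) (hK : δK = δA ∨ δK = δB)
    (C : Finset (Fin n)) (hC : IsMaxPCl δK X C) (hCne : (C ∩ Nmn).Nonempty)
    (αC : Fin n → Fin n) (hαC : IsMinMatching (C ∩ Nmn) (C ∩ Nmj) X αC) :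
    ∀ j ∈ C ∩ Nmn, αC j = αY j :=
  clique_matching_agrees_with_global_general nA δA δB hAB Nmn Nmj hmm Y hY αY hαY X hX δK hK C hC αC
    hαC
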